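/- Let x_1, ..., x_n be pairwise distinct points in R^M. Define the 2-Wasserstein distance between point clouds of equal size n as d_W(x_{1:n}, y_{1:n}) = sqrt(min over permutations σ ∈ S_n of (1/n) Σ_{i=1}^n ‖x_i − y_{σ(i)}‖²). Then there exists a constant c > 0 such that for all 0 < δ < c, the Wasserstein ball {y_{1:n} ∈ R^{nM} : d_W(x_{1:n}, y_{1:n}) ≤ δ} equals the union over all permutations σ ∈ S_n of the closed Euclidean balls of radius √n·δ in R^{nM} centered at x_{σ(1:n)}, and moreover these Euclidean balls are pairwise disjoint for distinct permutations. -/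

import Mathlib

open MeasureTheory Metric Real Asymptotics
open scoped BigOperators ENNReal

/-!
A minimum over the finitely many permutations is attained, so `dW x y ≤ δ` says that a single
permutation `σ` brings `y` within Euclidean distance `√n δ` of `x`; moving `σ` onto `x` shows that
the Wasserstein ball is the union of the Euclidean balls around the permuted copies of `x`, for
every `δ ≥ 0`. For pairwise distinct points, distinct permutations give distinct centres
`x_{σ(1:n)}`, and finitely many distinct points have pairwise disjoint closed balls of any small
enough radius.
-/

noncomputable def concat {n M : ℕ} (x : Fin n → EuclideanSpace ℝ (Fin M)) :
    EuclideanSpace ℝ (Fin n × Fin M) :=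
  WithLp.toLp 2 (fun p => x p.1 p.2)

noncomputable def deconcat {n M : ℕ} (z : EuclideanSpace ℝ (Fin n × Fin M)) :
    Fin n → EuclideanSpace ℝ (Fin M) :=
  fun i => WithLp.toLp 2 (fun m => z (i, m))

noncomputable def dW {n M : ℕ} (x y : Fin n → EuclideanSpace ℝ (Fin M)) : ℝ :=
  Real.sqrt (⨅ σ : Equiv.Perm (Fin n), (1 / (n : ℝ)) * ∑ i, dist (x i) (y (σ i)) ^ 2)

open Filter Topology

lemma ciInf_le_iff_exists_le_of_finite {ι α : Type*} [Finite ι] [Nonempty ι]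
    [ConditionallyCompleteLinearOrder α] {f : ι → α} {a : α} :
    ⨅ i, f i ≤ a ↔ ∃ i, f i ≤ a := by
  obtain ⟨i₀, hi₀⟩ := exists_eq_ciInf_of_finite (f := f)
  exact ⟨fun h => ⟨i₀, hi₀ ▸ h⟩,
    fun ⟨i, hi⟩ => (ciInf_le (Finite.bddBelow_range f) i).trans hi⟩

lemma eventually_pairwise_disjoint_closedBall {ι X : Type*} [Finite ι] [MetricSpace X]
    {p : ι → X} (hp : Function.Injective p) :
    ∀ᶠ r in 𝓝 (0 : ℝ), Pairwise fun i j => Disjoint (closedBall (p i) r) (closedBall (p j) r) := by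
  simp only [Pairwise, eventually_all]
  intro i j hij
  have hdouble : Tendsto (fun r : ℝ => r + r) (𝓝 0) (𝓝 0) := by
    simpa using tendsto_id.add (tendsto_id (x := 𝓝 (0 : ℝ)))
  filter_upwards [hdouble.eventually (eventually_lt_nhds (dist_pos.2 (hp.ne hij)))]
    with r hr using closedBall_disjoint_closedBall hr

section PointClouds

variable {n M : ℕ}

lemma concat_injective : Function.Injective (concat : (Fin n → EuclideanSpace ℝ (Fin M)) → _) :=
  fun _ _ h => funext fun i => by ext m; exact congrArg (· (i, m)) h

lemma dist_concat_concat (a b : Fin n → EuclideanSpace ℝ (Fin M)) :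
    dist (concat a) (concat b) = √(∑ i, dist (a i) (b i) ^ 2) := by
  rw [EuclideanSpace.dist_eq, Fintype.sum_prod_type]
  congr 1
  refine Finset.sum_congr rfl fun i _ => ?_
  rw [EuclideanSpace.dist_eq, Real.sq_sqrt (by positivity)]
  rfl

lemma mem_closedBall_concat_iff (z : EuclideanSpace ℝ (Fin n × Fin M))
    (w : Fin n → EuclideanSpace ℝ (Fin M)) {δ : ℝ} (hδ : 0 ≤ δ) :
    z ∈ closedBall (concat w) (√n * δ) ↔ ∑ i, dist (deconcat z i) (w i) ^ 2 ≤ n * δ ^ 2 := by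
  have hradius : √n * δ = √(n * δ ^ 2) := by
    rw [Real.sqrt_mul (Nat.cast_nonneg n), Real.sqrt_sq hδ]
  change dist (concat (deconcat z)) (concat w) ≤ _ ↔ _
  rw [dist_concat_concat, hradius,
    Real.sqrt_le_sqrt_iff (by positivity)]

lemma dW_le_iff (x y : Fin n → EuclideanSpace ℝ (Fin M)) {δ : ℝ} (hδ : 0 ≤ δ) :
    dW x y ≤ δ ↔ ∃ σ : Equiv.Perm (Fin n), ∑ i, dist (x i) (y (σ i)) ^ 2 ≤ n * δ ^ 2 := by
  rw [dW, Real.sqrt_le_left hδ, ciInf_le_iff_exists_le_of_finite]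
  refine exists_congr fun σ => ?_
  rcases n.eq_zero_or_pos with rfl | hn
  · simp [sq_nonneg]
  · rw [one_div, inv_mul_le_iff₀ (Nat.cast_pos.2 hn)]

lemma sum_dist_sq_comp_perm (x y : Fin n → EuclideanSpace ℝ (Fin M)) (σ : Equiv.Perm (Fin n)) :
    ∑ i, dist (x i) (y (σ i)) ^ 2 = ∑ i, dist (y i) (x (σ⁻¹ i)) ^ 2 := by
  rw [← Equiv.sum_comp σ fun i => dist (y i) (x (σ⁻¹ i)) ^ 2]
  simp [dist_comm]

theorem setOf_dW_le_eq_iUnion_closedBall (x : Fin n → EuclideanSpace ℝ (Fin M)) {δ : ℝ}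
    (hδ : 0 ≤ δ) :
    {z : EuclideanSpace ℝ (Fin n × Fin M) | dW x (deconcat z) ≤ δ} =
      ⋃ σ : Equiv.Perm (Fin n), closedBall (concat (x ∘ σ)) (√n * δ) := by
  ext z
  simp only [Set.mem_ofPred_eq, Set.mem_iUnion, dW_le_iff x _ hδ,
    mem_closedBall_concat_iff z _ hδ, sum_dist_sq_comp_perm x (deconcat z)]
  exact (Equiv.inv _).exists_congr_left

end PointClouds

theorem stmt1 {n M : ℕ} (x : Fin n → EuclideanSpace ℝ (Fin M))
    (hx : Function.Injective x) :
    ∃ c > 0, ∀ δ : ℝ, 0 < δ → δ < c →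
      ({z : EuclideanSpace ℝ (Fin n × Fin M) | dW x (deconcat z) ≤ δ} =
        ⋃ σ : Equiv.Perm (Fin n), closedBall (concat (x ∘ σ)) (Real.sqrt n * δ)) ∧
      (Set.univ : Set (Equiv.Perm (Fin n))).Pairwise fun σ₁ σ₂ =>
        Disjoint (closedBall (concat (x ∘ σ₁)) (Real.sqrt n * δ))
          (closedBall (concat (x ∘ σ₂)) (Real.sqrt n * δ)) := by
  have hcentres : Function.Injective fun σ : Equiv.Perm (Fin n) => concat (x ∘ σ) :=
    concat_injective.comp (hx.comp_left.comp DFunLike.coe_injective)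
  have hradius : Tendsto (fun δ : ℝ => √n * δ) (𝓝[>] 0) (𝓝 0) := by
    simpa using (tendsto_nhdsWithin_of_tendsto_nhds (tendsto_id (x := 𝓝 (0 : ℝ)))).const_mul √n
  obtain ⟨c, hc, hdisjoint⟩ := (nhdsGT_basis (0 : ℝ)).eventually_iff.1
    (hradius.eventually (eventually_pairwise_disjoint_closedBall hcentres))
  refine ⟨c, hc, fun δ hδ hδc => ⟨setOf_dW_le_eq_iUnion_closedBall x hδ.le, ?_⟩⟩
  exact Set.pairwise_univ.2 (hdisjoint ⟨hδ, hδc⟩)
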